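/- arXiv:1703.09185 — 2 statements merged into one kernel-verified Lean document; each statement's English description precedes it below -/
import Mathlib

section
/- If in addition ∑_{k=1}^∞ α_k² < ∞, then all agents asymptotically reach consensus: lim_{k→∞} max_{j=1,…,n} ‖δ^j_k‖ = 0, and consequently lim_{k→∞} ‖x^i_k − x^j_k‖ = 0 for all pairs of agents i, j. -/
/-!
Let `δ k` be the family of disagreements `x k j - x̄ k`. Since every `B k` is doubly stochastic,
`δ (k + 1) = B k δ k + η k`, where `η k` is the disagreement of the perturbation
`x (k + 1) - B k x k`; unrolling gives
`δ (k + 1) = Φ(k, 1) δ 1 + ∑_{s < k} Φ(k, s + 1) η s + η k`.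
All these families sum to zero, so `Φ(k, s)` acts on them only through its deviation from the
averaging matrix, which is `O(β ^ (k - s))`. The perturbations are `O(|α k|)`: the projection
moves the point `v̂ ∈ X` by at most twice the step `α k (∇f_j(v) - e)`, and the gradient of a
convex function is bounded on compact sets. Hence
`‖δ (k + 1)‖ ≲ β ^ k + ∑_{s < k} β ^ (k - s) |α s| + |α k|`, which tends to zero because
`α k → 0`.
-/

open Filter Finset Topology
open scoped Pointwise RealInnerProductSpace

section Gradient

variable {E : Type*} [NormedAddCommGroup E] [InnerProductSpace ℝ E] {f : E → ℝ}

theorem ConvexOn.inner_gradient_le_sub [CompleteSpace E] {f' x : E} (hf : ConvexOn ℝ Set.univ f)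
    (hx : HasGradientAt f f' x) (y : E) : ⟪f', y - x⟫ ≤ f y - f x := by
  have hline : ConvexOn ℝ Set.univ (f ∘ AffineMap.lineMap x y) := hf.comp_affineMap _
  have hderiv : HasDerivAt (f ∘ AffineMap.lineMap (k := ℝ) x y) ⟪f', y - x⟫ 0 := by
    have hx0 := AffineMap.lineMap_apply_zero x y (k := ℝ) ▸ hx.hasFDerivAt
    simpa using hx0.comp_hasDerivAt (0 : ℝ) AffineMap.hasDerivAt_lineMap
  simpa [slope_def_field] using
    hline.le_slope_of_hasDerivAt (Set.mem_univ 0) (Set.mem_univ 1) one_pos hderiv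

theorem ConvexOn.exists_norm_gradient_le_of_isCompact [ProperSpace E] {g : E → E}
    (hf : ConvexOn ℝ Set.univ f) (hg : ∀ z, HasGradientAt f (g z) z) {K : Set E}
    (hK : IsCompact K) :
    ∃ M, ∀ z ∈ K, ‖g z‖ ≤ M := by
  have hcont : Continuous f :=
    continuous_iff_continuousAt.2 fun z => (hg z).differentiableAt.continuousAt
  obtain ⟨F, hF⟩ := (hK.add (isCompact_closedBall (0 : E) 1)).exists_bound_of_continuousOn
    hcont.continuousOn
  refine ⟨2 * F, fun z hz => ?_⟩
  -- `‖g z‖ = ⟪g z, u⟫ ≤ f (z + u) - f z` for the unit vector `u` along `g z`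
  set u := ‖g z‖⁻¹ • g z
  have hu : ‖u‖ ≤ 1 := by
    rw [norm_smul, norm_inv, norm_norm]
    exact inv_mul_le_one
  have hgu : ⟪g z, u⟫ = ‖g z‖ := by
    rw [real_inner_smul_right, real_inner_self_eq_norm_sq, sq, ← mul_assoc, inv_mul_mul_self]
  have hFu := hF (z + u) (Set.add_mem_add hz (mem_closedBall_zero_iff.2 hu))
  have hFz := hF z (by
    simpa using Set.add_mem_add hz (Metric.mem_closedBall_self (x := (0 : E)) zero_le_one))
  have hineq := hf.inner_gradient_le_sub (hg z) (z + u)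
  rw [add_sub_cancel_left, hgu] at hineq
  rw [Real.norm_eq_abs, abs_le] at hFu hFz
  linarith

end Gradient

theorem tendsto_sum_range_pow_mul_of_tendsto_zero {β : ℝ} (hβ0 : 0 ≤ β) (hβ1 : β < 1)
    {a : ℕ → ℝ} (ha : Tendsto a atTop (𝓝 0)) :
    Tendsto (fun k => ∑ s ∈ range k, β ^ (k - s) * a s) atTop (𝓝 0) := by
  obtain ⟨A, hA⟩ := ha.abs.bddAbove_range
  -- with `t = k - 1 - s` the sum becomes a series dominated by `β ^ (t + 1) * A`,
  -- so Tannery's theorem applies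
  set F : ℕ → ℕ → ℝ := fun k t => if t < k then β ^ (t + 1) * a (k - 1 - t) else 0
  have hF : ∀ k, ∑' t, F k t = ∑ s ∈ range k, β ^ (k - s) * a s := by
    intro k
    rw [tsum_eq_sum (s := range k) fun t ht => if_neg (by simpa using ht),
      ← sum_range_reflect (fun s => β ^ (k - s) * a s)]
    refine sum_congr rfl fun t ht => ?_
    have ht := mem_range.1 ht
    simp only [if_pos ht]
    congr 2
    omega
  have hlim : ∀ t, Tendsto (F · t) atTop (𝓝 0) := by
    intro t
    have := (ha.comp (tendsto_sub_atTop_nat (1 + t))).const_mul (β ^ (t + 1))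
    rw [mul_zero] at this
    refine this.congr' ?_
    filter_upwards [eventually_gt_atTop t] with k hk
    simp [F, hk, Nat.sub_sub]
  have hbound : ∀ k t, ‖F k t‖ ≤ β ^ (t + 1) * A := by
    intro k t
    by_cases ht : t < k
    · simp only [F, if_pos ht, norm_mul, norm_pow, Real.norm_eq_abs, abs_of_nonneg hβ0]
      exact mul_le_mul_of_nonneg_left (hA ⟨_, rfl⟩) (by positivity)
    · simp only [F, if_neg ht, norm_zero]
      exact mul_nonneg (by positivity) ((abs_nonneg _).trans (hA ⟨0, rfl⟩))
  have hdom := tendsto_tsum_of_dominated_convergence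
    (((summable_nat_add_iff 1).2 (summable_geometric_of_lt_one hβ0 hβ1)).mul_right A) hlim
    (Eventually.of_forall (hbound ·))
  simpa [hF] using hdom

theorem tendsto_iSup_of_forall_tendsto_zero {ι : Type*} [Fintype ι] {u : ℕ → ι → ℝ}
    (hu0 : ∀ k i, 0 ≤ u k i) (hu : ∀ i, Tendsto (u · i) atTop (𝓝 0)) :
    Tendsto (fun k => ⨆ i, u k i) atTop (𝓝 0) := by
  refine squeeze_zero (fun k => Real.iSup_nonneg (hu0 k))
    (fun k => Real.iSup_le (fun i => single_le_sum (fun j _ => hu0 k j) (mem_univ i))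
      (sum_nonneg fun j _ => hu0 k j)) ?_
  simpa using tendsto_finsetSum univ fun i _ => hu i

namespace Consensus

section Mixing

variable {ι E : Type*} [Fintype ι] [AddCommGroup E] [Module ℝ E]

def mix (A : Matrix ι ι ℝ) : (ι → E) →ₗ[ℝ] ι → E where
  toFun w j := ∑ i, A j i • w i
  map_add' w v := by ext j; simp [smul_add, sum_add_distrib]
  map_smul' c w := by ext j; simp [smul_comm c, smul_sum]

@[simp] lemma mix_apply (A : Matrix ι ι ℝ) (w : ι → E) (j : ι) :
    mix A w j = ∑ i, A j i • w i := rfl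

lemma mix_mul (A C : Matrix ι ι ℝ) (w : ι → E) : mix (A * C) w = mix A (mix C w) := by
  ext j
  simp only [mix_apply, Matrix.mul_apply, sum_smul, smul_sum, mul_smul]
  exact sum_comm

lemma eq_mix_transition_add_sum {B : ℕ → Matrix ι ι ℝ} {Φ : ℕ → ℕ → Matrix ι ι ℝ}
    (hΦdiag : ∀ s, Φ s s = B s) (hΦrec : ∀ k s, s ≤ k → Φ (k + 1) s = B (k + 1) * Φ k s)
    {δ η : ℕ → ι → E} (hδ : ∀ k, δ (k + 1) = mix (B k) (δ k) + η k) (k : ℕ) :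
    δ (k + 1) = mix (Φ k 0) (δ 0) + ∑ s ∈ range k, mix (Φ k (s + 1)) (η s) + η k := by
  induction k with
  | zero => simp [hδ, hΦdiag]
  | succ k ih =>
    have hsum : ∀ s ∈ range k, mix (B (k + 1)) (mix (Φ k (s + 1)) (η s))
        = mix (Φ (k + 1) (s + 1)) (η s) := fun s hs => by
      rw [← mix_mul, hΦrec k (s + 1) (mem_range.1 hs)]
    rw [hδ (k + 1), ih, map_add, map_add, map_sum, sum_congr rfl hsum, ← mix_mul,
      ← hΦrec k 0 k.zero_le, sum_range_succ, ← hΦdiag (k + 1)]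
    abel

end Mixing

variable {E : Type*} [NormedAddCommGroup E] [NormedSpace ℝ E] {n : ℕ}

noncomputable def disagreement (w : Fin n → E) : Fin n → E := fun j => w j - (n : ℝ)⁻¹ • ∑ i, w i

lemma sum_disagreement (w : Fin n → E) : ∑ j, disagreement w j = 0 := by
  rcases n.eq_zero_or_pos with rfl | hn
  · simp
  have hn' : (n : ℝ) ≠ 0 := by positivity
  simp [disagreement, sum_sub_distrib, ← Nat.cast_smul_eq_nsmul ℝ, smul_smul, mul_inv_cancel₀ hn']

lemma norm_disagreement_le {w : Fin n → E} {W : ℝ} (hW : ∀ i, ‖w i‖ ≤ W) (j : Fin n) :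
    ‖disagreement w j‖ ≤ 2 * W := by
  have hn : (0 : ℝ) < n := Nat.cast_pos.2 (Fin.pos j)
  have hmean : ‖(n : ℝ)⁻¹ • ∑ i, w i‖ ≤ W := by
    rw [norm_smul, norm_inv, Real.norm_natCast, inv_mul_le_iff₀ hn]
    simpa using norm_sum_le_of_le univ fun i _ => hW i
  have htri := norm_sub_le (w j) ((n : ℝ)⁻¹ • ∑ i, w i)
  unfold disagreement
  linarith [hW j]

lemma disagreement_mix_add {A : Matrix (Fin n) (Fin n) ℝ} (hrow : ∀ i, ∑ j, A i j = 1)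
    (hcol : ∀ j, ∑ i, A i j = 1) (w v : Fin n → E) :
    disagreement (mix A w + v) = mix A (disagreement w) + disagreement v := by
  have hsum : ∑ j, ∑ i, A j i • w i = ∑ i, w i := by
    rw [sum_comm]
    simp [← sum_smul, hcol]
  ext j
  simp only [disagreement, Pi.add_apply, mix_apply, smul_sub, sum_sub_distrib, ← sum_smul, hrow,
    one_smul, sum_add_distrib, hsum, smul_add]
  abel

lemma norm_mix_le_of_sum_eq_zero {A : Matrix (Fin n) (Fin n) ℝ} {w : Fin n → E} {j : Fin n}
    {ρ W : ℝ} (hw : ∑ i, w i = 0) (hA : ∀ i, |A j i - 1 / n| ≤ ρ) (hW : ∀ i, ‖w i‖ ≤ W) :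
    ‖mix A w j‖ ≤ n * (ρ * W) := by
  have hcentre : mix A w j = ∑ i, (A j i - 1 / n) • w i := by
    simp [sub_smul, sum_sub_distrib, ← smul_sum, hw]
  rw [hcentre]
  calc ‖∑ i, (A j i - 1 / n) • w i‖ ≤ ∑ _i : Fin n, ρ * W := norm_sum_le_of_le _ fun i _ => by
        rw [norm_smul, Real.norm_eq_abs]
        exact mul_le_mul (hA i) (hW i) (norm_nonneg _) ((abs_nonneg _).trans (hA i))
    _ = n * (ρ * W) := by simp

section Transition

variable {B : ℕ → Matrix (Fin n) (Fin n) ℝ} {Φ : ℕ → ℕ → Matrix (Fin n) (Fin n) ℝ} {θ β : ℝ}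
  {y : ℕ → Fin n → E} {a : ℕ → ℝ}

lemma norm_disagreement_succ_le (hrow : ∀ k i, ∑ j, B k i j = 1)
    (hcol : ∀ k j, ∑ i, B k i j = 1) (hΦdiag : ∀ s, Φ s s = B s)
    (hΦrec : ∀ k s, s ≤ k → Φ (k + 1) s = B (k + 1) * Φ k s)
    (hΦ : ∀ k s i j, s ≤ k → |Φ k s i j - 1 / n| ≤ θ * β ^ (k - s + 1))
    (hy : ∀ k j, ‖y (k + 1) j - mix (B k) (y k) j‖ ≤ a k) (k : ℕ) (j : Fin n) :
    ‖disagreement (y (k + 1)) j‖ ≤ n * (θ * β ^ (k + 1) * ∑ i, ‖disagreement (y 0) i‖)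
      + 2 * n * θ * ∑ s ∈ range k, β ^ (k - s) * a s + 2 * a k := by
  set η := fun k => disagreement (y (k + 1) - mix (B k) (y k))
  have hδ : ∀ k, disagreement (y (k + 1)) = mix (B k) (disagreement (y k)) + η k := fun k => by
    rw [← disagreement_mix_add (hrow k) (hcol k), add_sub_cancel]
  have hη : ∀ k i, ‖η k i‖ ≤ 2 * a k := fun k => norm_disagreement_le (hy k)
  have hinit : ‖mix (Φ k 0) (disagreement (y 0)) j‖
      ≤ n * (θ * β ^ (k + 1) * ∑ i, ‖disagreement (y 0) i‖) :=
    norm_mix_le_of_sum_eq_zero (sum_disagreement _) (fun i => by simpa using hΦ k 0 j i k.zero_le)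
      fun i => single_le_sum (fun i _ => norm_nonneg _) (mem_univ i)
  have hperturb : ‖∑ s ∈ range k, mix (Φ k (s + 1)) (η s) j‖
      ≤ 2 * n * θ * ∑ s ∈ range k, β ^ (k - s) * a s := by
    rw [mul_sum]
    refine norm_sum_le_of_le _ fun s hs => ?_
    refine (norm_mix_le_of_sum_eq_zero (ρ := θ * β ^ (k - s)) (sum_disagreement _) (fun i => ?_)
      (hη s)).trans_eq (by ring)
    rw [show k - s = k - (s + 1) + 1 by have := mem_range.1 hs; omega]
    exact hΦ k (s + 1) j i (mem_range.1 hs)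
  rw [eq_mix_transition_add_sum (δ := fun k => disagreement (y k)) hΦdiag hΦrec hδ k,
    Pi.add_apply, Pi.add_apply, Finset.sum_apply]
  exact norm_add₃_le.trans (add_le_add_three hinit hperturb (hη k j))

theorem tendsto_norm_disagreement (hrow : ∀ k i, ∑ j, B k i j = 1)
    (hcol : ∀ k j, ∑ i, B k i j = 1) (hΦdiag : ∀ s, Φ s s = B s)
    (hΦrec : ∀ k s, s ≤ k → Φ (k + 1) s = B (k + 1) * Φ k s) (hβ0 : 0 ≤ β) (hβ1 : β < 1)
    (hΦ : ∀ k s i j, s ≤ k → |Φ k s i j - 1 / n| ≤ θ * β ^ (k - s + 1))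
    (ha : Tendsto a atTop (𝓝 0)) (hy : ∀ k j, ‖y (k + 1) j - mix (B k) (y k) j‖ ≤ a k)
    (j : Fin n) : Tendsto (fun k => ‖disagreement (y k) j‖) atTop (𝓝 0) := by
  rw [← tendsto_add_atTop_iff_nat 1]
  refine squeeze_zero (fun _ => norm_nonneg _)
    (norm_disagreement_succ_le hrow hcol hΦdiag hΦrec hΦ hy · j) ?_
  have hgeom := (tendsto_pow_atTop_nhds_zero_of_lt_one hβ0 hβ1).comp (tendsto_add_atTop_nat 1)
  have hconv := tendsto_sum_range_pow_mul_of_tendsto_zero hβ0 hβ1 ha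
  have hinit := ((hgeom.const_mul θ).mul_const (∑ i, ‖disagreement (y 0) i‖)).const_mul (n : ℝ)
  simpa using (hinit.add (hconv.const_mul (2 * (n : ℝ) * θ))).add (ha.const_mul 2)

end Transition

end Consensus

theorem exists_norm_iterate_sub_mix_le {ι E : Type*} [Fintype ι] [NormedAddCommGroup E]
    [InnerProductSpace ℝ E] [ProperSpace E] {X : Set E} (hXcompact : IsCompact X)
    (hXconvex : Convex ℝ X) {P : E → E} (hP : ∀ z, P z ∈ X ∧ ∀ y ∈ X, ‖z - P z‖ ≤ ‖z - y‖)
    {f : ι → E → ℝ} {g : ι → E → E} (hfconv : ∀ j, ConvexOn ℝ Set.univ (f j))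
    (hfgrad : ∀ j z, HasGradientAt (f j) (g j z) z) {α : ℕ → ℝ} {A : ℝ}
    (hA : ∀ k, 1 ≤ k → |α k| ≤ A) {B : ℕ → Matrix ι ι ℝ} (hBnn : ∀ k i j, 1 ≤ k → 0 ≤ B k i j)
    (hBrow : ∀ k i, 1 ≤ k → ∑ j, B k i j = 1) {e : ℕ → ι → E} {Δ : ℝ}
    (hebound : ∀ k j, 1 ≤ k → ‖e k j‖ ≤ Δ) {x : ℕ → ι → E} (hx1 : ∀ j, x 1 j ∈ X)
    (hupdate : ∀ k j, 1 ≤ k →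
      x (k + 1) j = P ((∑ i, B k j i • x k i) -
        α k • (g j ((∑ i, B k j i • x k i) + α k • e k j) - e k j))) :
    ∃ C, ∀ k, 1 ≤ k → ∀ j, ‖x (k + 1) j - Consensus.mix (B k) (x k) j‖ ≤ C * |α k| := by
  have hxX : ∀ k, 1 ≤ k → ∀ j, x k j ∈ X := by
    intro k hk
    induction k, hk using Nat.le_induction with
    | base => exact hx1
    | succ k hk _ => exact fun j => hupdate k j hk ▸ (hP _).1
  have hmixX : ∀ k, 1 ≤ k → ∀ j, Consensus.mix (B k) (x k) j ∈ X := fun k hk j =>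
    hXconvex.sum_mem (fun i _ => hBnn k j i hk) (hBrow k j hk) fun i _ => hxX k hk i
  choose M hM using fun j => (hfconv j).exists_norm_gradient_le_of_isCompact (hfgrad j)
    (hXcompact.add (isCompact_closedBall (0 : E) (A * Δ)))
  obtain ⟨M', hM'⟩ := (Set.finite_range M).bddAbove
  refine ⟨2 * (M' + Δ), fun k hk j => ?_⟩
  set v := Consensus.mix (B k) (x k) j
  have hstep : ‖α k • e k j‖ ≤ A * Δ := by
    rw [norm_smul, Real.norm_eq_abs]
    exact mul_le_mul (hA k hk) (hebound k j hk) (norm_nonneg _) ((abs_nonneg _).trans (hA k hk))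
  have hgrad : ‖g j (v + α k • e k j)‖ ≤ M' := (hM j _ (Set.add_mem_add (hmixX k hk j)
    (mem_closedBall_zero_iff.2 hstep))).trans (hM' ⟨j, rfl⟩)
  set z := v - α k • (g j (v + α k • e k j) - e k j)
  have hdir : ‖g j (v + α k • e k j) - e k j‖ ≤ M' + Δ :=
    (norm_sub_le _ _).trans (add_le_add hgrad (hebound k j hk))
  have hnear : ‖z - P z‖ ≤ ‖z - v‖ := (hP z).2 v (hmixX k hk j)
  rw [hupdate k j hk]
  calc ‖P z - v‖ ≤ ‖z - P z‖ + ‖z - v‖ := by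
        simpa only [norm_sub_rev z] using norm_sub_le_norm_sub_add_norm_sub (P z) z v
    _ ≤ 2 * (|α k| * ‖g j (v + α k • e k j) - e k j‖) := by
        rw [show z - v = -(α k • (g j (v + α k • e k j) - e k j)) by simp [z], norm_neg,
          norm_smul, Real.norm_eq_abs] at hnear ⊢
        linarith
    _ ≤ 2 * (|α k| * (M' + Δ)) := by gcongr
    _ = 2 * (M' + Δ) * |α k| := by ring

theorem stmt_4_general
    (n D : ℕ)
    (Δ : ℝ)
    (X : Set (EuclideanSpace ℝ (Fin D)))
    (hXcompact : IsCompact X) (hXconvex : Convex ℝ X)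
    (P : EuclideanSpace ℝ (Fin D) → EuclideanSpace ℝ (Fin D))
    (hP : ∀ z, P z ∈ X ∧ ∀ y ∈ X, ‖z - P z‖ ≤ ‖z - y‖)
    (f : Fin n → EuclideanSpace ℝ (Fin D) → ℝ)
    (g : Fin n → EuclideanSpace ℝ (Fin D) → EuclideanSpace ℝ (Fin D))
    (hfconv : ∀ j, ConvexOn ℝ Set.univ (f j))
    (hfgrad : ∀ j z, HasGradientAt (f j) (g j z) z)
    (α : ℕ → ℝ)
    (B : ℕ → Matrix (Fin n) (Fin n) ℝ)
    (hBnn : ∀ k i j, 1 ≤ k → 0 ≤ B k i j)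
    (hBrow : ∀ k i, 1 ≤ k → ∑ j, B k i j = 1)
    (hBcol : ∀ k j, 1 ≤ k → ∑ i, B k i j = 1)
    (Φ : ℕ → ℕ → Matrix (Fin n) (Fin n) ℝ)
    (hΦdiag : ∀ s, 1 ≤ s → Φ s s = B s)
    (hΦrec : ∀ k s, 1 ≤ s → s ≤ k → Φ (k + 1) s = B (k + 1) * Φ k s)
    (θ β : ℝ) (hβ0 : 0 < β) (hβ1 : β < 1)
    (hΦbound : ∀ k s i j, 1 ≤ s → s ≤ k →
      |Φ k s i j - 1 / n| ≤ θ * β ^ (k - s + 1))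
    (e : ℕ → Fin n → EuclideanSpace ℝ (Fin D))
    (hebound : ∀ k j, 1 ≤ k → ‖e k j‖ ≤ Δ)
    (x : ℕ → Fin n → EuclideanSpace ℝ (Fin D))
    (hx1 : ∀ j, x 1 j ∈ X)
    (hupdate : ∀ k j, 1 ≤ k →
      x (k + 1) j = P ((∑ i, B k j i • x k i) -
        α k • (g j ((∑ i, B k j i • x k i) + α k • e k j) - e k j)))
    (hαsq : Summable fun k => α (k + 1) ^ 2)
    : Filter.Tendsto (fun k => ⨆ j, ‖x k j - (n : ℝ)⁻¹ • ∑ i, x k i‖)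
        Filter.atTop (nhds 0) ∧
      ∀ i j, Filter.Tendsto (fun k => ‖x k i - x k j‖) Filter.atTop (nhds 0) := by
  have hα : Tendsto (fun k => |α (k + 1)|) atTop (𝓝 0) := by
    simpa [Real.sqrt_sq_eq_abs] using hαsq.tendsto_atTop_zero.sqrt
  obtain ⟨A, hA⟩ := hα.bddAbove_range
  obtain ⟨C, hC⟩ := exists_norm_iterate_sub_mix_le hXcompact hXconvex hP hfconv hfgrad
    (fun k hk => by obtain ⟨k, rfl⟩ := Nat.exists_eq_add_of_le' hk; exact hA ⟨k, rfl⟩)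
    hBnn hBrow hebound hx1 hupdate
  have hδ : ∀ j, Tendsto (fun k => ‖Consensus.disagreement (x k) j‖) atTop (𝓝 0) := by
    intro j
    rw [← tendsto_add_atTop_iff_nat 1]
    exact Consensus.tendsto_norm_disagreement (B := fun k => B (k + 1))
      (Φ := fun k s => Φ (k + 1) (s + 1)) (fun k i => hBrow (k + 1) i k.succ_pos)
      (fun k i => hBcol (k + 1) i k.succ_pos) (fun s => hΦdiag (s + 1) s.succ_pos)
      (fun k s hsk => hΦrec (k + 1) (s + 1) s.succ_pos (by omega)) hβ0.le hβ1
      (fun k s i j hsk => by simpa using hΦbound (k + 1) (s + 1) i j s.succ_pos (by omega))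
      (by simpa using hα.const_mul C) (fun k => hC (k + 1) k.succ_pos) j
  refine ⟨tendsto_iSup_of_forall_tendsto_zero (fun _ _ => norm_nonneg _) hδ, fun i j => ?_⟩
  refine squeeze_zero (fun _ => norm_nonneg _) (fun k => ?_) (by simpa using (hδ i).add (hδ j))
  rw [← sub_sub_sub_cancel_right (x k i) (x k j) ((n : ℝ)⁻¹ • ∑ l, x k l)]
  exact norm_sub_le _ _

/-- Consensus Claim: if ∑ α_k² < ∞, the maximum disagreement vanishes and all
pairs of agents asymptotically agree. -/
theorem stmt_4
    (n D : ℕ) (hn : 1 ≤ n) (hD : 1 ≤ D)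
    (L N Δ : ℝ) (hL : 0 ≤ L) (hN : 0 ≤ N) (hΔ : 0 ≤ Δ)
    (X : Set (EuclideanSpace ℝ (Fin D)))
    (hXne : X.Nonempty) (hXcompact : IsCompact X) (hXconvex : Convex ℝ X)
    (P : EuclideanSpace ℝ (Fin D) → EuclideanSpace ℝ (Fin D))
    (hP : ∀ z, P z ∈ X ∧ ∀ y ∈ X, ‖z - P z‖ ≤ ‖z - y‖)
    (f : Fin n → EuclideanSpace ℝ (Fin D) → ℝ)
    (g : Fin n → EuclideanSpace ℝ (Fin D) → EuclideanSpace ℝ (Fin D))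
    (hfconv : ∀ j, ConvexOn ℝ Set.univ (f j))
    (hfgrad : ∀ j z, HasGradientAt (f j) (g j z) z)
    (hgbound : ∀ j, ∀ z ∈ X, ‖g j z‖ ≤ L)
    (hglip : ∀ j, ∀ z ∈ X, ∀ w ∈ X, ‖g j z - g j w‖ ≤ N * ‖z - w‖)
    (α : ℕ → ℝ) (hαpos : ∀ k, 1 ≤ k → 0 < α k)
    (hαmono : ∀ k, 1 ≤ k → α (k + 1) ≤ α k)
    (B : ℕ → Matrix (Fin n) (Fin n) ℝ)
    (hBnn : ∀ k i j, 1 ≤ k → 0 ≤ B k i j)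
    (hBrow : ∀ k i, 1 ≤ k → ∑ j, B k i j = 1)
    (hBcol : ∀ k j, 1 ≤ k → ∑ i, B k i j = 1)
    (Φ : ℕ → ℕ → Matrix (Fin n) (Fin n) ℝ)
    (hΦdiag : ∀ s, 1 ≤ s → Φ s s = B s)
    (hΦrec : ∀ k s, 1 ≤ s → s ≤ k → Φ (k + 1) s = B (k + 1) * Φ k s)
    (θ β : ℝ) (hθ : 0 < θ) (hβ0 : 0 < β) (hβ1 : β < 1)
    (hΦbound : ∀ k s i j, 1 ≤ s → s ≤ k →
      |Φ k s i j - 1 / n| ≤ θ * β ^ (k - s + 1))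
    (e : ℕ → Fin n → EuclideanSpace ℝ (Fin D))
    (hebound : ∀ k j, 1 ≤ k → ‖e k j‖ ≤ Δ)
    (hesum : ∀ k, 1 ≤ k → ∑ j, e k j = 0)
    (x : ℕ → Fin n → EuclideanSpace ℝ (Fin D))
    (hx1 : ∀ j, x 1 j ∈ X)
    (hupdate : ∀ k j, 1 ≤ k →
      x (k + 1) j = P ((∑ i, B k j i • x k i) -
        α k • (g j ((∑ i, B k j i • x k i) + α k • e k j) - e k j)))
    (hαsq : Summable fun k => α (k + 1) ^ 2)
    : Filter.Tendsto (fun k => ⨆ j, ‖x k j - (n : ℝ)⁻¹ • ∑ i, x k i‖)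
        Filter.atTop (nhds 0) ∧
      ∀ i j, Filter.Tendsto (fun k => ‖x k i - x k j‖) Filter.atTop (nhds 0) :=
  stmt_4_general n D Δ X hXcompact hXconvex P hP f g hfconv hfgrad α B hBnn hBrow hBcol Φ hΦdiag
    hΦrec θ β hβ0 hβ1 hΦbound e hebound x hx1 hupdate hαsq
end

section
/- Let (E_k), (F_k), (G_k), (H_k) be sequences of nonnegative real numbers such that ∑_{k=0}^∞ F_k < ∞, ∑_{k=0}^∞ H_k < ∞, and E_{k+1} ≤ (1 + F_k) E_k − G_k + H_k for every k. Then the sequence (E_k) converges to a (finite) nonnegative real number, and ∑_{k=0}^∞ G_k < ∞. -/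
/-!
Dividing by the partial products `P k = ∏_{j<k} (1 + F j)`, which increase to a finite limit,
turns the recursion into `E (k+1) / P (k+1) + G k / P (k+1) ≤ E k / P k + H k`. Subtracting the
partial sums of `H` then gives a nonincreasing sequence that is bounded below, hence convergent,
and telescoping bounds the partial sums of `G k / P (k+1)`.
-/

open Filter Topology Finset

theorem summable_of_add_le_of_bddBelow {Z g : ℕ → ℝ} (hZ : BddBelow (Set.range Z))
    (hg : ∀ k, 0 ≤ g k) (hstep : ∀ k, Z (k + 1) + g k ≤ Z k) : Summable g := by
  obtain ⟨m, hm⟩ := hZ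
  refine summable_of_sum_range_le hg (c := Z 0 - m) fun n => ?_
  calc ∑ k ∈ range n, g k ≤ ∑ k ∈ range n, (Z k - Z (k + 1)) :=
        sum_le_sum fun k _ => by linarith [hstep k]
    _ = Z 0 - Z n := sum_range_sub' Z n
    _ ≤ Z 0 - m := by linarith [hm (Set.mem_range_self n)]

theorem tendsto_and_summable_of_add_le_add {u g h : ℕ → ℝ} (hu : BddBelow (Set.range u))
    (hg : ∀ k, 0 ≤ g k) (hh : Summable h) (hstep : ∀ k, u (k + 1) + g k ≤ u k + h k) :
    (∃ a, Tendsto u atTop (𝓝 a)) ∧ Summable g := by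
  set S : ℕ → ℝ := fun n => ∑ k ∈ range n, h k
  have hS : Tendsto S atTop (𝓝 (∑' k, h k)) := hh.tendsto_sum_tsum_nat
  have hZstep : ∀ k, (u (k + 1) - S (k + 1)) + g k ≤ u k - S k := fun k => by
    simp only [S, sum_range_succ]; linarith [hstep k]
  have hZ : BddBelow (Set.range fun k => u k - S k) := by
    obtain ⟨m, hm⟩ := hu
    obtain ⟨s, hs⟩ := hS.bddAbove_range
    refine ⟨m - s, ?_⟩
    rintro _ ⟨k, rfl⟩
    linarith [hm (Set.mem_range_self k), hs (Set.mem_range_self k)]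
  have hZanti : Antitone fun k => u k - S k :=
    antitone_nat_of_succ_le fun k => by linarith [hZstep k, hg k]
  refine ⟨⟨_, ((tendsto_atTop_ciInf hZanti hZ).add hS).congr fun k => ?_⟩,
    summable_of_add_le_of_bddBelow hZ hg hZstep⟩
  simp

section

variable {E F G H : ℕ → ℝ}

theorem one_le_prod_range_one_add (hF : ∀ k, 0 ≤ F k) (n : ℕ) :
    1 ≤ ∏ j ∈ range n, (1 + F j) :=
  one_le_prod fun j _ => le_add_of_nonneg_right (hF j)

theorem div_prod_range_succ_add_le (hF : ∀ k, 0 ≤ F k) (hH : ∀ k, 0 ≤ H k)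
    (hrec : ∀ k, E (k + 1) ≤ (1 + F k) * E k - G k + H k) (k : ℕ) :
    E (k + 1) / ∏ j ∈ range (k + 1), (1 + F j) + G k / ∏ j ∈ range (k + 1), (1 + F j)
      ≤ E k / ∏ j ∈ range k, (1 + F j) + H k := by
  set P := ∏ j ∈ range k, (1 + F j)
  have hP : 0 < P := zero_lt_one.trans_le (one_le_prod_range_one_add hF k)
  have hP' : 1 ≤ P * (1 + F k) := by
    simpa [P, prod_range_succ] using one_le_prod_range_one_add hF (k + 1)
  rw [prod_range_succ, ← add_div, div_le_iff₀ (by positivity)]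
  calc E (k + 1) + G k ≤ (1 + F k) * E k + H k := by linarith [hrec k]
    _ ≤ (1 + F k) * E k + H k * (P * (1 + F k)) := by
        gcongr; exact le_mul_of_one_le_right (hH k) hP'
    _ = (E k / P + H k) * (P * (1 + F k)) := by field_simp

end

/-- Deterministic Robbins–Siegmund convergence result for nonnegative sequences. -/
theorem stmt_5 (E F G H : ℕ → ℝ)
    (hE : ∀ k, 0 ≤ E k) (hF : ∀ k, 0 ≤ F k) (hG : ∀ k, 0 ≤ G k) (hH : ∀ k, 0 ≤ H k)
    (hFsum : Summable F) (hHsum : Summable H)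
    (hrec : ∀ k, E (k + 1) ≤ (1 + F k) * E k - G k + H k) :
    (∃ l : ℝ, 0 ≤ l ∧ Filter.Tendsto E Filter.atTop (nhds l)) ∧ Summable G := by
  set P : ℕ → ℝ := fun k => ∏ j ∈ range k, (1 + F j)
  have hP : ∀ k, 0 < P k := fun k => zero_lt_one.trans_le (one_le_prod_range_one_add hF k)
  have hPlim : Tendsto P atTop (𝓝 (∏' j, (1 + F j))) :=
    (Real.multipliable_one_add_of_summable hFsum).tendsto_prod_tprod_nat
  obtain ⟨C, hC⟩ := hPlim.bddAbove_range
  obtain ⟨⟨a, ha⟩, hGP⟩ := tendsto_and_summable_of_add_le_add (u := fun k => E k / P k)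
    ⟨0, by rintro _ ⟨k, rfl⟩; exact div_nonneg (hE k) (hP k).le⟩
    (fun k => div_nonneg (hG k) (hP (k + 1)).le) hHsum (div_prod_range_succ_add_le hF hH hrec)
  have hElim : Tendsto E atTop (𝓝 (a * ∏' j, (1 + F j))) :=
    (ha.mul hPlim).congr fun k => div_mul_cancel₀ _ (hP k).ne'
  refine ⟨⟨_, ge_of_tendsto' hElim hE, hElim⟩, ?_⟩
  refine (hGP.mul_right C).of_nonneg_of_le hG fun k => ?_
  calc G k = G k / P (k + 1) * P (k + 1) := (div_mul_cancel₀ _ (hP (k + 1)).ne').symm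
    _ ≤ G k / P (k + 1) * C :=
        mul_le_mul_of_nonneg_left (hC (Set.mem_range_self _)) (div_nonneg (hG k) (hP _).le)
end
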